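/- Given a directed tree (𝒩, ℰ) and any tagged partition (h_0, H) of 𝒩, there exists a Lions-admissible tagged partition refining (h_0, H), and moreover there is a unique maximal such refinement: a Lions-admissible tagged partition (h̃_0', H̃') ⊆ (h_0, H) such that every Lions-admissible tagged partition (h̃_0'', H̃'') ⊆ (h_0, H) satisfies (h̃_0'', H̃'') ⊆ (h̃_0', H̃'). -/
import Mathlib


/-- `P` is a partition of the subset `S`. -/
def IsPartitionOn {α : Type*} (S : Set α) (P : Set (Set α)) : Prop :=
  ∅ ∉ P ∧ (∀ p ∈ P, p ⊆ S) ∧ ∀ x ∈ S, ∃! p, p ∈ P ∧ x ∈ p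

/-- A rooted directed tree on the vertex type `V`, encoded by its parent map:
every edge points from a vertex to its parent, and every vertex reaches the
root by iterating the parent map. -/
structure RTree (V : Type*) where
  root : V
  parent : V → V
  parent_root : parent root = root
  reaches : ∀ x, ∃ n : ℕ, parent^[n] x = root

/-- The depth of a vertex: the distance to the root along the unique path. -/
noncomputable def tdepth {V : Type*} (T : RTree V) (x : V) : ℕ :=
  sInf {n : ℕ | T.parent^[n] x = T.root}

/-- A tagged partition `(h₀, H)` of the vertices of a directed tree is
Lions-admissible if, writing `H' = (H ∪ {h₀}) \ {∅}`:
(1) `h₀ ≠ ∅` implies `h₀` contains the root;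
(2) whenever `x, y` lie in the same hyperedge with `depth x < depth y`, the
parent of `y` lies in that hyperedge;
(3) whenever equal-depth non-root `x, y` lie in the same hyperedge and their
parents differ, both parents lie in that hyperedge. -/
def LionsAdmissible {V : Type*} (T : RTree V) (h₀ : Set V) (H : Set (Set V)) :
    Prop :=
  (h₀.Nonempty → T.root ∈ h₀) ∧
  (∀ h ∈ (H ∪ {h₀}) \ {(∅ : Set V)}, ∀ x ∈ h, ∀ y ∈ h,
    tdepth T x < tdepth T y → T.parent y ∈ h) ∧
  (∀ h ∈ (H ∪ {h₀}) \ {(∅ : Set V)}, ∀ x ∈ h, ∀ y ∈ h,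
    x ≠ T.root → y ≠ T.root → tdepth T x = tdepth T y →
      T.parent x ≠ T.parent y → (T.parent x ∈ h ∧ T.parent y ∈ h))

/-- The partial order on tagged partitions: `(p₀,P) ⊆ (q₀,Q)` iff `p₀ ⊆ q₀`
and every block of `P` is contained in a block of `Q ∪ {q₀}`. -/
def tpLe {V : Type*} (p₀ : Set V) (P : Set (Set V))
    (q₀ : Set V) (Q : Set (Set V)) : Prop :=
  p₀ ⊆ q₀ ∧ ∀ p ∈ P, ∃ q ∈ (Q ∪ {q₀}), p ⊆ q

namespace LionsAux

variable {V : Type*} (T : RTree V)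

lemma tdepth_spec (x : V) : T.parent^[tdepth T x] x = T.root :=
  Nat.sInf_mem (T.reaches x)

lemma tdepth_le {x : V} {n : ℕ} (h : T.parent^[n] x = T.root) : tdepth T x ≤ n :=
  Nat.sInf_le h

lemma eq_root_of_tdepth_eq_zero {x : V} (h : tdepth T x = 0) : x = T.root := by
  have hs := tdepth_spec T x
  rw [h] at hs
  simpa using hs

lemma tdepth_parent {x : V} (hx : x ≠ T.root) :
    tdepth T (T.parent x) + 1 = tdepth T x := by
  have h1 : tdepth T x ≠ 0 := fun h => hx (eq_root_of_tdepth_eq_zero T h)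
  obtain ⟨d, hd⟩ : ∃ d, tdepth T x = d + 1 :=
    ⟨tdepth T x - 1, (Nat.succ_pred_eq_of_ne_zero h1).symm⟩
  have hspec := tdepth_spec T x
  rw [hd] at hspec
  have h2 : T.parent^[d] (T.parent x) = T.root := by
    rw [← Function.iterate_succ_apply]; exact hspec
  have hle : tdepth T (T.parent x) ≤ d := tdepth_le T h2
  have h3 : T.parent^[tdepth T (T.parent x) + 1] x = T.root := by
    rw [Function.iterate_succ_apply]; exact tdepth_spec T (T.parent x)
  have hge : tdepth T x ≤ tdepth T (T.parent x) + 1 := tdepth_le T h3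
  omega

lemma tdepth_iterate {x : V} : ∀ k, k ≤ tdepth T x →
    tdepth T (T.parent^[k] x) = tdepth T x - k := by
  intro k
  induction k with
  | zero => simp
  | succ k ih =>
    intro hk
    have hk' : k ≤ tdepth T x := by omega
    have hd := ih hk'
    have hne : T.parent^[k] x ≠ T.root := by
      intro h
      have := tdepth_le T h
      omega
    have := tdepth_parent T hne
    rw [Function.iterate_succ_apply']
    omega

/-- A set satisfying conditions (2) and (3) of Lions-admissibility. -/
def Good (g : Set V) : Prop :=
  (∀ x ∈ g, ∀ y ∈ g, tdepth T x < tdepth T y → T.parent y ∈ g) ∧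
  (∀ x ∈ g, ∀ y ∈ g, x ≠ T.root → y ≠ T.root → tdepth T x = tdepth T y →
     T.parent x ≠ T.parent y → T.parent x ∈ g ∧ T.parent y ∈ g)

lemma good_empty : Good T (∅ : Set V) := by
  constructor <;> intro x hx <;> simp at hx

lemma good_singleton (x : V) : Good T ({x} : Set V) := by
  constructor
  · intro a ha b hb hlt
    simp only [Set.mem_singleton_iff] at ha hb
    subst ha; subst hb; omega
  · intro a ha b hb _ _ _ hne
    simp only [Set.mem_singleton_iff] at ha hb
    subst ha; subst hb; exact absurd rfl hne

lemma good_chain {g : Set V} (hg : Good T g) {x y : V} (hx : x ∈ g) (hy : y ∈ g) :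
    ∀ k, k + tdepth T x ≤ tdepth T y → T.parent^[k] y ∈ g := by
  intro k
  induction k with
  | zero => intro _; simpa using hy
  | succ k ih =>
    intro hk
    have hw : T.parent^[k] y ∈ g := ih (by omega)
    have hd : tdepth T (T.parent^[k] y) = tdepth T y - k :=
      tdepth_iterate T k (by omega)
    rw [Function.iterate_succ_apply']
    exact hg.1 x hx _ hw (by omega)

lemma ne_root_of_pos {x : V} (h : 0 < tdepth T x) : x ≠ T.root := by
  intro he
  subst he
  have : tdepth T T.root ≤ 0 := tdepth_le T (by simp)
  omega

/-- cross case of condition (2) for a union -/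
lemma cross2 {g₁ g₂ : Set V} (hg₁ : Good T g₁) (hg₂ : Good T g₂) {z : V}
    (hz₁ : z ∈ g₁) (hz₂ : z ∈ g₂) {x y : V} (hx : x ∈ g₁) (hy : y ∈ g₂)
    (hlt : tdepth T x < tdepth T y) : T.parent y ∈ g₁ ∪ g₂ := by
  by_cases hzy : tdepth T z < tdepth T y
  · exact Or.inr (hg₂.1 z hz₂ y hy hzy)
  · set k := tdepth T z - tdepth T y with hk
    set w := T.parent^[k] z with hw
    have hw₁ : w ∈ g₁ := good_chain T hg₁ hx hz₁ k (by omega)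
    have hw₂ : w ∈ g₂ := good_chain T hg₂ hy hz₂ k (by omega)
    have hdw : tdepth T w = tdepth T y := by
      rw [hw, tdepth_iterate T k (by omega)]
      omega
    by_cases hwy : w = y
    · exact Or.inl (hg₁.1 x hx y (hwy ▸ hw₁) hlt)
    · have hyr : y ≠ T.root := ne_root_of_pos T (by omega)
      have hwr : w ≠ T.root := ne_root_of_pos T (by omega)
      by_cases hpp : T.parent w = T.parent y
      · exact Or.inl (hpp ▸ hg₁.1 x hx w hw₁ (by omega))
      · exact Or.inr (hg₂.2 w hw₂ y hy hwr hyr hdw hpp).2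

/-- cross case of condition (3) for a union: membership of `parent x`. -/
lemma cross3 {g₁ g₂ : Set V} (hg₁ : Good T g₁) (hg₂ : Good T g₂) {z : V}
    (hz₁ : z ∈ g₁) (hz₂ : z ∈ g₂) {x y : V} (hx : x ∈ g₁) (hy : y ∈ g₂)
    (hxr : x ≠ T.root) (hyr : y ≠ T.root) (hd : tdepth T x = tdepth T y)
    (hne : T.parent x ≠ T.parent y) : T.parent x ∈ g₁ ∪ g₂ := by
  have hxd : 0 < tdepth T x := by
    rcases Nat.eq_zero_or_pos (tdepth T x) with h | h
    · exact absurd (eq_root_of_tdepth_eq_zero T h) hxr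
    · exact h
  by_cases hzx : tdepth T z < tdepth T x
  · exact Or.inl (hg₁.1 z hz₁ x hx hzx)
  · set k := tdepth T z - tdepth T x with hk
    set w := T.parent^[k] z with hw
    have hw₁ : w ∈ g₁ := good_chain T hg₁ hx hz₁ k (by omega)
    have hw₂ : w ∈ g₂ := good_chain T hg₂ hy hz₂ k (by omega)
    have hdw : tdepth T w = tdepth T x := by
      rw [hw, tdepth_iterate T k (by omega)]
      omega
    have hwr : w ≠ T.root := ne_root_of_pos T (by omega)
    by_cases hwx : w = x
    · exact Or.inr (hg₂.2 x (hwx ▸ hw₂) y hy hxr hyr hd hne).1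
    · by_cases hpp : T.parent w = T.parent x
      · by_cases hwy : w = y
        · exact absurd (hwy ▸ hpp.symm) hne
        · have hpy : T.parent w ≠ T.parent y := hpp ▸ hne
          exact Or.inr (hpp ▸ (hg₂.2 w hw₂ y hy hwr hyr (by omega) hpy).1)
      · exact Or.inl (hg₁.2 w hw₁ x hx hwr hxr hdw fun h => hpp h).2

lemma good_union {g₁ g₂ : Set V} (hg₁ : Good T g₁) (hg₂ : Good T g₂)
    (hne : (g₁ ∩ g₂).Nonempty) : Good T (g₁ ∪ g₂) := by
  obtain ⟨z, hz₁, hz₂⟩ := hne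
  constructor
  · rintro x (hx | hx) y (hy | hy) hlt
    · exact Or.inl (hg₁.1 x hx y hy hlt)
    · exact cross2 T hg₁ hg₂ hz₁ hz₂ hx hy hlt
    · exact (cross2 T hg₂ hg₁ hz₂ hz₁ hx hy hlt).symm
    · exact Or.inr (hg₂.1 x hx y hy hlt)
  · rintro x (hx | hx) y (hy | hy) hxr hyr hd hne
    · obtain ⟨a, b⟩ := hg₁.2 x hx y hy hxr hyr hd hne
      exact ⟨Or.inl a, Or.inl b⟩
    · exact ⟨cross3 T hg₁ hg₂ hz₁ hz₂ hx hy hxr hyr hd hne,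
        (cross3 T hg₂ hg₁ hz₂ hz₁ hy hx hyr hxr hd.symm (Ne.symm hne)).symm⟩
    · exact ⟨(cross3 T hg₂ hg₁ hz₂ hz₁ hx hy hxr hyr hd hne).symm,
        cross3 T hg₁ hg₂ hz₁ hz₂ hy hx hyr hxr hd.symm (Ne.symm hne)⟩
    · obtain ⟨a, b⟩ := hg₂.2 x hx y hy hxr hyr hd hne
      exact ⟨Or.inr a, Or.inr b⟩

/-- The maximal good subset of `q` containing `x`. -/
def cls (q : Set V) (x : V) : Set V :=
  ⋃₀ {g | Good T g ∧ g ⊆ q ∧ x ∈ g}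

lemma cls_subset (q : Set V) (x : V) : cls T q x ⊆ q := by
  rintro y ⟨g, ⟨_, hgq, _⟩, hy⟩
  exact hgq hy

lemma mem_cls {q : Set V} {x : V} (hx : x ∈ q) : x ∈ cls T q x :=
  ⟨{x}, ⟨good_singleton T x, by simpa using hx, rfl⟩, rfl⟩

lemma subset_cls {q g : Set V} {x : V} (hg : Good T g) (hgq : g ⊆ q) (hx : x ∈ g) :
    g ⊆ cls T q x := fun y hy => ⟨g, ⟨hg, hgq, hx⟩, hy⟩

lemma good_cls (q : Set V) (x : V) : Good T (cls T q x) := by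
  constructor
  · rintro a ⟨g₁, ⟨hg₁, hq₁, hx₁⟩, ha⟩ b ⟨g₂, ⟨hg₂, hq₂, hx₂⟩, hb⟩ hlt
    have hu : Good T (g₁ ∪ g₂) := good_union T hg₁ hg₂ ⟨x, hx₁, hx₂⟩
    exact subset_cls T hu (Set.union_subset hq₁ hq₂) (Or.inl hx₁)
      (hu.1 a (Or.inl ha) b (Or.inr hb) hlt)
  · rintro a ⟨g₁, ⟨hg₁, hq₁, hx₁⟩, ha⟩ b ⟨g₂, ⟨hg₂, hq₂, hx₂⟩, hb⟩ har hbr hd hne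
    have hu : Good T (g₁ ∪ g₂) := good_union T hg₁ hg₂ ⟨x, hx₁, hx₂⟩
    have hsub := subset_cls T hu (Set.union_subset hq₁ hq₂) (Or.inl hx₁)
    obtain ⟨c, d⟩ := hu.2 a (Or.inl ha) b (Or.inr hb) har hbr hd hne
    exact ⟨hsub c, hsub d⟩

lemma cls_eq_of_mem {q : Set V} {x y : V} (hy : y ∈ cls T q x) :
    cls T q y = cls T q x := by
  obtain ⟨g', ⟨hg', hq', hx'⟩, hy'⟩ := hy
  apply Set.Subset.antisymm
  · rintro b ⟨h, ⟨hh, hhq, hyh⟩, hb⟩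
    have hu : Good T (h ∪ g') := good_union T hh hg' ⟨y, hyh, hy'⟩
    exact subset_cls T hu (Set.union_subset hhq hq') (Or.inr hx') (Or.inl hb)
  · rintro b ⟨h, ⟨hh, hhq, hxh⟩, hb⟩
    have hu : Good T (h ∪ g') := good_union T hh hg' ⟨x, hxh, hx'⟩
    exact subset_cls T hu (Set.union_subset hhq hq') (Or.inr hy') (Or.inl hb)

end LionsAux

namespace LionsAux

lemma good_of_adm {V : Type*} {T : RTree V} {h₀ : Set V} {H : Set (Set V)}
    (hA : LionsAdmissible T h₀ H) {h : Set V}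
    (hh : h ∈ (H ∪ {h₀}) \ {(∅ : Set V)}) : Good T h :=
  ⟨hA.2.1 h hh, hA.2.2 h hh⟩

lemma tp_blocks_subset {V : Type*} {p₀ q₀ : Set V} {P Q : Set (Set V)}
    (hP : IsPartitionOn (Set.univ \ p₀) P)
    (h1 : tpLe p₀ P q₀ Q) (h2 : tpLe q₀ Q p₀ P) : P ⊆ Q := by
  intro p hp
  have hpne : p.Nonempty := by
    rcases Set.eq_empty_or_nonempty p with h | h
    · exact absurd (h ▸ hp) hP.1
    · exact h
  obtain ⟨x, hx⟩ := hpne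
  have hxnp : x ∉ p₀ := (hP.2.1 p hp hx).2
  obtain ⟨q, hq, hpq⟩ := h1.2 p hp
  have hq0 : p₀ = q₀ := Set.Subset.antisymm h1.1 h2.1
  rcases hq with hq | hq
  · obtain ⟨p', hp', hqp'⟩ := h2.2 q hq
    have hxp' : x ∈ p' := hqp' (hpq hx)
    rcases hp' with hp' | hp'
    · have := hP.2.2 x ⟨trivial, hxnp⟩
      obtain ⟨r, -, hr⟩ := this
      have h1' := hr p ⟨hp, hx⟩
      have h2' := hr p' ⟨hp', hxp'⟩
      have hpp' : p = p' := h1'.trans h2'.symm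
      have : q = p := Set.Subset.antisymm (hpp' ▸ hqp') hpq
      exact this ▸ hq
    · simp only [Set.mem_singleton_iff] at hp'
      exact absurd (hp' ▸ hxp') hxnp
  · simp only [Set.mem_singleton_iff] at hq
    exact absurd (hq0 ▸ (hq ▸ hpq hx)) hxnp

end LionsAux

open LionsAux

/-- Every tagged partition of the vertices of a (finite) directed tree admits
a Lions-admissible refinement, and there is a unique maximal such
refinement. -/
theorem stmt19 (V : Type) [Fintype V] (T : RTree V)
    (h₀ : Set V) (H : Set (Set V))
    (hP : IsPartitionOn (Set.univ \ h₀) H) :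
    (∃ g : Set V × Set (Set V),
      IsPartitionOn (Set.univ \ g.1) g.2 ∧
      LionsAdmissible T g.1 g.2 ∧ tpLe g.1 g.2 h₀ H) ∧
    (∃! g : Set V × Set (Set V),
      IsPartitionOn (Set.univ \ g.1) g.2 ∧
      LionsAdmissible T g.1 g.2 ∧ tpLe g.1 g.2 h₀ H ∧
      ∀ g' : Set V × Set (Set V),
        IsPartitionOn (Set.univ \ g'.1) g'.2 →
        LionsAdmissible T g'.1 g'.2 → tpLe g'.1 g'.2 h₀ H →
        tpLe g'.1 g'.2 g.1 g.2) := by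
  classical
  obtain ⟨hPne, hPsub, hPuniq⟩ := hP
  set tag : Set V := if T.root ∈ h₀ then cls T h₀ T.root else ∅ with htag
  set newH : Set (Set V) :=
    {c | ∃ q ∈ H ∪ {h₀}, ∃ x ∈ q, c = cls T q x} \ {tag} with hnewH
  -- basic facts about tag
  have tag_sub : tag ⊆ h₀ := by
    rw [htag]; split
    · exact cls_subset T h₀ T.root
    · exact Set.empty_subset _
  have tag_eq : tag.Nonempty → T.root ∈ h₀ ∧ tag = cls T h₀ T.root := by
    intro hne
    rw [htag]
    split_ifs with hroot
    · exact ⟨hroot, rfl⟩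
    · rw [htag] at hne; simp [hroot] at hne
  have tag_root : tag.Nonempty → T.root ∈ tag := by
    intro hne
    obtain ⟨hr, he⟩ := tag_eq hne
    rw [he]; exact mem_cls T hr
  -- uniqueness of the original block containing a point
  have uniq_q : ∀ q ∈ H ∪ {h₀}, ∀ q' ∈ H ∪ {h₀}, ∀ x : V,
      x ∈ q → x ∈ q' → q = q' := by
    rintro q (hq | hq) q' (hq' | hq') x hxq hxq'
    · obtain ⟨r, -, hr⟩ := hPuniq x ⟨trivial, (hPsub q hq hxq).2⟩
      exact (hr q ⟨hq, hxq⟩).trans (hr q' ⟨hq', hxq'⟩).symm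
    · simp only [Set.mem_singleton_iff] at hq'
      exact absurd (hq' ▸ hxq') (hPsub q hq hxq).2
    · simp only [Set.mem_singleton_iff] at hq
      exact absurd (hq ▸ hxq) (hPsub q' hq' hxq').2
    · simp only [Set.mem_singleton_iff] at hq hq'
      rw [hq, hq']
  -- the partition property
  have part : IsPartitionOn (Set.univ \ tag) newH := by
    refine ⟨?_, ?_, ?_⟩
    · rintro ⟨⟨q, hq, x, hxq, hc⟩, -⟩
      exact (hc ▸ mem_cls T hxq : x ∈ (∅ : Set V))
    · rintro c ⟨⟨q, hq, x, hxq, hc⟩, hct⟩ w hw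
      refine ⟨trivial, fun hwt => ?_⟩
      obtain ⟨hr, he⟩ := tag_eq ⟨w, hwt⟩
      rcases hq with hq | hq
      · exact (hPsub q hq (cls_subset T q x (hc ▸ hw))).2 (tag_sub hwt)
      · simp only [Set.mem_singleton_iff] at hq
        subst hq
        apply hct
        rw [Set.mem_singleton_iff, hc]
        calc cls T q x = cls T q w := (cls_eq_of_mem T (hc ▸ hw)).symm
          _ = cls T q T.root := cls_eq_of_mem T (he ▸ hwt)
          _ = tag := he.symm
    · rintro x ⟨-, hxt⟩
      -- choose the original block containing x
      obtain ⟨q, hq, hxq⟩ : ∃ q ∈ H ∪ {h₀}, x ∈ q := by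
        by_cases hx0 : x ∈ h₀
        · exact ⟨h₀, Or.inr rfl, hx0⟩
        · obtain ⟨p, ⟨hpH, hxp⟩, -⟩ := hPuniq x ⟨trivial, hx0⟩
          exact ⟨p, Or.inl hpH, hxp⟩
      refine ⟨cls T q x, ⟨⟨⟨q, hq, x, hxq, rfl⟩, fun h => ?_⟩, mem_cls T hxq⟩, ?_⟩
      · simp only [Set.mem_singleton_iff] at h
        exact hxt (h ▸ mem_cls T hxq)
      · rintro c ⟨⟨⟨q', hq', x', hx'q', hc⟩, -⟩, hxc⟩
        have hc' : c = cls T q' x := by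
          rw [hc]; exact (cls_eq_of_mem T (hc ▸ hxc)).symm
        have hxq' : x ∈ q' := cls_subset T q' x (hc' ▸ hxc)
        rw [hc', uniq_q q' hq' q hq x hxq' hxq]
  -- admissibility
  have blocks_good : ∀ h ∈ (newH ∪ {tag}) \ {(∅ : Set V)}, Good T h := by
    rintro h ⟨(hh | hh), hne⟩
    · obtain ⟨⟨q, hq, x, hxq, hc⟩, -⟩ := hh
      exact hc ▸ good_cls T q x
    · simp only [Set.mem_singleton_iff] at hh hne
      subst hh
      obtain ⟨-, he⟩ := tag_eq (Set.nonempty_iff_ne_empty.mpr hne)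
      exact he ▸ good_cls T h₀ T.root
  have adm : LionsAdmissible T tag newH :=
    ⟨tag_root, fun h hh => (blocks_good h hh).1, fun h hh => (blocks_good h hh).2⟩
  -- refinement
  have tple : tpLe tag newH h₀ H := by
    refine ⟨tag_sub, ?_⟩
    rintro p ⟨⟨q, hq, x, hxq, hc⟩, -⟩
    exact ⟨q, hq, hc ▸ cls_subset T q x⟩
  -- maximality
  have max : ∀ g' : Set V × Set (Set V),
      IsPartitionOn (Set.univ \ g'.1) g'.2 →
      LionsAdmissible T g'.1 g'.2 → tpLe g'.1 g'.2 h₀ H →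
      tpLe g'.1 g'.2 tag newH := by
    rintro ⟨p₀, P⟩ ⟨hne', hsub', -⟩ hadm ⟨hle1, hle2⟩
    constructor
    · intro w hw
      have hroot : T.root ∈ p₀ := hadm.1 ⟨w, hw⟩
      have hgood : Good T p₀ := good_of_adm hadm
        ⟨Or.inr rfl, by simp [Set.nonempty_iff_ne_empty.mp ⟨w, hw⟩]⟩
      have hr0 : T.root ∈ h₀ := hle1 hroot
      have : tag = cls T h₀ T.root := by rw [htag, if_pos hr0]
      rw [this]
      exact subset_cls T hgood hle1 hroot hw
    · intro p hp
      have hpne : p.Nonempty := by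
        rcases Set.eq_empty_or_nonempty p with h | h
        · exact absurd (h ▸ hp) hne'
        · exact h
      obtain ⟨x, hx⟩ := hpne
      obtain ⟨q, hq, hpq⟩ := hle2 p hp
      have hgood : Good T p := good_of_adm hadm
        ⟨Or.inl hp, by simp [Set.nonempty_iff_ne_empty.mp ⟨x, hx⟩]⟩
      have hsub : p ⊆ cls T q x := subset_cls T hgood hpq hx
      by_cases hct : cls T q x = tag
      · exact ⟨cls T q x, Or.inr (by simp [hct]), hsub⟩
      · exact ⟨cls T q x, Or.inl ⟨⟨q, hq, x, hpq hx, rfl⟩, hct⟩, hsub⟩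
  refine ⟨⟨(tag, newH), part, adm, tple⟩,
    ⟨(tag, newH), ⟨part, adm, tple, max⟩, ?_⟩⟩
  rintro ⟨p₀, P⟩ ⟨part', adm', tple', max'⟩
  have h1 : tpLe tag newH p₀ P := max' (tag, newH) part adm tple
  have h2 : tpLe p₀ P tag newH := max (p₀, P) part' adm' tple'
  have he0 : p₀ = tag := Set.Subset.antisymm h2.1 h1.1
  have heP : P = newH := Set.Subset.antisymm
    (tp_blocks_subset part' h2 h1) (tp_blocks_subset part h1 h2)
  simp [he0, heP]
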